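/- Let S : [0,1] → ℝ be integrable. For integers K, R ≥ 1 and an R×R complex matrix M, define the K×K matrix Ψ_{K,R}(M) = ∫_0^1 S(ν) ( a_R(ν)^H M a_R(ν) ) d_K(ν) d_K(ν)^H dν. Then for every K×K matrix A and every R×R matrix B, (1/K) Tr( A Ψ_{K,R}(B) ) = (1/R) Tr( Ψ_{R,K}(A) B ). -/

import Mathlib

open MeasureTheory Matrix Complex

/-- The Fourier vector `d_R(ν) = (1, e^{2πiν}, …, e^{2πi(R−1)ν})ᵀ`. -/
noncomputable def dvec (R : ℕ) (ν : ℝ) : Fin R → ℂ :=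
  fun j => Complex.exp (2 * (Real.pi : ℂ) * Complex.I * ((j : ℕ) : ℂ) * (ν : ℂ))

/-- The normalized Fourier vector `a_R(ν) = d_R(ν)/√R`. -/
noncomputable def avec (R : ℕ) (ν : ℝ) : Fin R → ℂ :=
  ((1 / Real.sqrt R : ℝ) : ℂ) • dvec R ν

/-- Entrywise (Bochner) integral over `[0,1]` of a matrix-valued function. -/
noncomputable def mInt {m n : ℕ} (f : ℝ → Matrix (Fin m) (Fin n) ℂ) :
    Matrix (Fin m) (Fin n) ℂ :=
  Matrix.of fun i j => ∫ ν in Set.Icc (0 : ℝ) 1, f ν i j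

/-- The Toeplitzification operator
`Ψ_{K,R}(M) = ∫₀¹ S(ν) (a_R(ν)ᴴ M a_R(ν)) d_K(ν) d_K(ν)ᴴ dν`. -/
noncomputable def Psi (S : ℝ → ℝ) (K R : ℕ) (M : Matrix (Fin R) (Fin R) ℂ) :
    Matrix (Fin K) (Fin K) ℂ :=
  mInt fun ν =>
    ((S ν : ℂ) * (star (avec R ν) ⬝ᵥ M.mulVec (avec R ν))) •
      Matrix.vecMulVec (dvec K ν) (star (dvec K ν))

/-! The trace pairing turns `Ψ` into a weighted integral of a product of two quadratic forms:
`Tr (A Ψ_{K,R}(B)) = ∫ S(ν) (a_R(ν)ᴴ B a_R(ν)) (d_K(ν)ᴴ A d_K(ν)) dν`, and since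
`d_K = √K a_K`, dividing by `K` gives `∫ S(ν) (a_R(ν)ᴴ B a_R(ν)) (a_K(ν)ᴴ A a_K(ν)) dν`,
which is symmetric in `(K, A)` and `(R, B)`. -/

noncomputable def avecQuadForm {n : ℕ} (M : Matrix (Fin n) (Fin n) ℂ) (ν : ℝ) : ℂ :=
  star (avec n ν) ⬝ᵥ M *ᵥ avec n ν

@[fun_prop]
lemma continuous_dvec (n : ℕ) : Continuous (dvec n) := by
  unfold dvec
  fun_prop

@[fun_prop]
lemma continuous_avecQuadForm {n : ℕ} (M : Matrix (Fin n) (Fin n) ℂ) :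
    Continuous (avecQuadForm M) := by
  unfold avecQuadForm avec
  fun_prop

lemma avecQuadForm_eq {n : ℕ} (M : Matrix (Fin n) (Fin n) ℂ) (ν : ℝ) :
    avecQuadForm M ν = (n : ℂ)⁻¹ * (star (dvec n ν) ⬝ᵥ M *ᵥ dvec n ν) := by
  -- `(1 / √n)² = n⁻¹` also at `n = 0`, where both sides are `0`.
  have hsq : ((1 / Real.sqrt n : ℝ) : ℂ) * ((1 / Real.sqrt n : ℝ) : ℂ) = (n : ℂ)⁻¹ := by
    rw [← ofReal_mul, div_mul_div_comm, one_mul, Real.mul_self_sqrt n.cast_nonneg]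
    push_cast
    rw [one_div]
  rw [avecQuadForm, avec, star_smul, mulVec_smul, smul_dotProduct, dotProduct_smul,
    smul_smul, smul_eq_mul, ← hsq, RCLike.star_def, conj_ofReal]

lemma trace_mul_vecMulVec {m n α : Type*} [Fintype m] [Fintype n] [CommSemiring α]
    (A : Matrix n m α) (u : m → α) (v : n → α) :
    (A * vecMulVec u v).trace = v ⬝ᵥ A *ᵥ u := by
  rw [mul_vecMulVec, trace_vecMulVec, dotProduct_comm]

lemma trace_mul_mInt {m n : ℕ} (A : Matrix (Fin n) (Fin m) ℂ) (f : ℝ → Matrix (Fin m) (Fin n) ℂ)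
    (hf : ∀ i j, IntegrableOn (fun ν => f ν i j) (Set.Icc 0 1)) :
    (A * mInt f).trace = ∫ ν in Set.Icc 0 1, (A * f ν).trace := by
  simp only [trace, diag, mul_apply, mInt, of_apply, ← integral_const_mul]
  rw [integral_finsetSum]
  · exact Finset.sum_congr rfl fun i _ =>
      (integral_finsetSum _ fun j _ => (hf j i).const_mul _).symm
  · exact fun i _ => integrable_finsetSum _ fun j _ => (hf j i).const_mul _

lemma inv_mul_trace_mul_Psi (S : ℝ → ℝ) (hS : IntegrableOn S (Set.Icc 0 1)) (n m : ℕ)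
    (A : Matrix (Fin n) (Fin n) ℂ) (B : Matrix (Fin m) (Fin m) ℂ) :
    (n : ℂ)⁻¹ * (A * Psi S n m B).trace
      = ∫ ν in Set.Icc 0 1, (S ν : ℂ) * (avecQuadForm B ν * avecQuadForm A ν) := by
  have hint : ∀ i j, IntegrableOn (fun ν => (((S ν : ℂ) * avecQuadForm B ν) •
      vecMulVec (dvec n ν) (star (dvec n ν))) i j) (Set.Icc 0 1) := fun i j => by
    simp only [Matrix.smul_apply, vecMulVec_apply, Pi.star_apply, smul_eq_mul, mul_assoc]
    exact IntegrableOn.mul_continuousOn (hS.ofReal (𝕜 := ℂ)) (by fun_prop) isCompact_Icc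
  have hPsi : Psi S n m B = mInt fun ν =>
      ((S ν : ℂ) * avecQuadForm B ν) • vecMulVec (dvec n ν) (star (dvec n ν)) := rfl
  rw [hPsi, trace_mul_mInt A _ hint, ← integral_const_mul]
  refine integral_congr_ae (Filter.Eventually.of_forall fun ν => ?_)
  simp only [Matrix.mul_smul, trace_smul, trace_mul_vecMulVec, smul_eq_mul, avecQuadForm_eq A]
  ring

theorem psi_trace_duality_general (S : ℝ → ℝ)
    (hS : IntegrableOn S (Set.Icc (0 : ℝ) 1))
    (K R : ℕ)
    (A : Matrix (Fin K) (Fin K) ℂ) (B : Matrix (Fin R) (Fin R) ℂ) :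
    (1 / (K : ℂ)) * (A * Psi S K R B).trace = (1 / (R : ℂ)) * (Psi S R K A * B).trace := by
  rw [trace_mul_comm (Psi S R K A) B, one_div, one_div, inv_mul_trace_mul_Psi S hS,
    inv_mul_trace_mul_Psi S hS]
  simp_rw [mul_comm (avecQuadForm A _)]

/-- trace-duality of the Toeplitzification operators. -/
theorem psi_trace_duality (S : ℝ → ℝ)
    (hS : IntegrableOn S (Set.Icc (0 : ℝ) 1))
    (K R : ℕ) (hK : 1 ≤ K) (hR : 1 ≤ R)
    (A : Matrix (Fin K) (Fin K) ℂ) (B : Matrix (Fin R) (Fin R) ℂ) :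
    (1 / (K : ℂ)) * (A * Psi S K R B).trace = (1 / (R : ℂ)) * (Psi S R K A * B).trace :=
  psi_trace_duality_general S hS K R A B
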